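/- Let C be a category with pullbacks, let p : Y → X be a morphism, and let Y•_s : Δ_s^op → C be the semisimplicial object underlying the Čech nerve of p (so Y•_s([n]) = the (n+1)-fold fiber product Y ×_X Y ×_X ⋯ ×_X Y). Then Y•_s is the pointwise right Kan extension of its restriction to Δ_{s,≤1}^op: the canonical map Y•_s → Ran_{j₁}(Y•_s ∘ j₁) is an isomorphism, where j₁ : Δ_{s,≤1}^op → Δ_s^op is the inclusion. Equivalently, for each n ≥ 2 the object Y ×_X ⋯ ×_X Y (n+1 factors) is the limit over the connected category ((Δ_{s,≤1})_{/[n]})^op of the diagram sending [0] → [n] to Y and [1] → [n] to Y ×_X Y. -/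

import Mathlib

/-! A cone over the restricted diagram at `[n]` has a leg to `Y` for every vertex of `[n]` and a
leg to `Y ×_X Y` for every edge. Naturality makes each component of a leg a vertex leg, and the
edge legs force all vertex legs to agree after composing with `p`; so the vertex legs assemble into
a unique map to the `(n+1)`-fold fibre product compatible with the cone. -/

open CategoryTheory CategoryTheory.Limits

/-- The semisimplicial category `Δ_s`. -/
structure DeltaS where
  len : ℕ

instance : Category DeltaS where
  Hom m n := {f : Fin (m.len + 1) → Fin (n.len + 1) // StrictMono f}
  id m := ⟨id, strictMono_id⟩
  comp f g := ⟨g.1 ∘ f.1, g.2.comp f.2⟩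
  id_comp f := rfl
  comp_id f := rfl
  assoc f g h := rfl

/-- The full subcategory `Δ_{s,≤1}` of `Δ_s` spanned by `[0]` and `[1]`. -/
def DeltaSLe1 := ObjectProperty.FullSubcategory (fun m : DeltaS => m.len ≤ 1)

instance : Category DeltaSLe1 := ObjectProperty.FullSubcategory.category _

/-- The inclusion `j₁ : Δ_{s,≤1} ⥤ Δ_s`. -/
def deltaSIncl : DeltaSLe1 ⥤ DeltaS := ObjectProperty.ι _

/-- The faithful functor `Δ_s ⥤ Δ` to the simplex category. -/
def deltaSToSimplex : DeltaS ⥤ SimplexCategory where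
  obj m := SimplexCategory.mk m.len
  map f := SimplexCategory.mkHom ⟨f.1, f.2.monotone⟩
  map_id m := by apply SimplexCategory.Hom.ext; rfl
  map_comp f g := by apply SimplexCategory.Hom.ext; rfl


namespace CategoryTheory.Limits.WidePullback

variable {C : Type u} [Category.{v} C] {J : Type*} [Nonempty J] {B : C} {objs : J → C}
  {arrows : ∀ j, objs j ⟶ B} [HasWidePullback B objs arrows]

lemma hom_ext_of_nonempty {W : C} (g₁ g₂ : W ⟶ widePullback B objs arrows)
    (h : ∀ j, g₁ ≫ π arrows j = g₂ ≫ π arrows j) : g₁ = g₂ := by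
  obtain ⟨j⟩ := ‹Nonempty J›
  refine hom_ext _ _ _ h ?_
  rw [← π_arrow arrows j, reassoc_of% h j]

end CategoryTheory.Limits.WidePullback

def DeltaSLe1.zero : DeltaSLe1 := ⟨⟨0⟩, zero_le_one⟩

def DeltaSLe1.one : DeltaSLe1 := ⟨⟨1⟩, le_rfl⟩

def DeltaS.vertex (m : DeltaS) (i : Fin (m.len + 1)) : deltaSIncl.obj .zero ⟶ m :=
  show {f : Fin 1 → Fin (m.len + 1) // StrictMono f} from ⟨fun _ => i, Subsingleton.strictMono _⟩

def DeltaS.edge (m : DeltaS) {i j : Fin (m.len + 1)} (hij : i < j) : deltaSIncl.obj .one ⟶ m :=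
  show {f : Fin 2 → Fin (m.len + 1) // StrictMono f} from
    ⟨![i, j], Fin.strictMono_iff_lt_succ.mpr fun k => by fin_cases k; exact hij⟩

def DeltaSLe1.vertex (a : DeltaSLe1) (k : Fin (a.obj.len + 1)) : DeltaSLe1.zero ⟶ a :=
  ObjectProperty.homMk (DeltaS.vertex a.obj k)

namespace CategoryTheory.Arrow

variable {C : Type u} [Category.{v} C] [HasFiniteWidePullbacks C] (f : Arrow C)

noncomputable abbrev semisimplicialCechNerve : DeltaSᵒᵖ ⥤ C := deltaSToSimplex.op ⋙ f.cechNerve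

lemma semisimplicialCechNerve_map_π {a b : DeltaS} (φ : a ⟶ b) (k : Fin (a.len + 1)) :
    f.semisimplicialCechNerve.map φ.op ≫ WidePullback.π _ k = WidePullback.π _ (φ.1 k) :=
  WidePullback.lift_π ..

noncomputable abbrev restrictionRightExtension :
    Functor.RightExtension deltaSIncl.op (deltaSIncl.op ⋙ f.semisimplicialCechNerve) :=
  .mk _ (𝟙 _)

namespace restrictionRightExtension

variable {f} {m : DeltaS}
  (s : Cone (StructuredArrow.proj (Opposite.op m) deltaSIncl.op ⋙ deltaSIncl.op ⋙ f.semisimplicialCechNerve))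

lemma coneAt_π_app_comp_π (g : StructuredArrow (Opposite.op m) deltaSIncl.op)
    (k : Fin (g.right.unop.obj.len + 1)) :
    (f.restrictionRightExtension.coneAt (Opposite.op m)).π.app g ≫
        WidePullback.π _ k = WidePullback.π _ (g.hom.unop.1 k) := by
  change (f.semisimplicialCechNerve.map g.hom.unop.op ≫ 𝟙 _) ≫ _ = _
  rw [Category.comp_id]
  exact semisimplicialCechNerve_map_π f g.hom.unop k

noncomputable def vertexLeg (i : Fin (m.len + 1)) : s.pt ⟶ f.left :=
  s.π.app (StructuredArrow.mk (m.vertex i).op) ≫ WidePullback.π _ 0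

lemma π_app_comp_π (g : StructuredArrow (Opposite.op m) deltaSIncl.op)
    (k : Fin (g.right.unop.obj.len + 1)) :
    s.π.app g ≫ WidePullback.π _ k = vertexLeg s (g.hom.unop.1 k) := by
  have hnat := s.w (StructuredArrow.homMk (g.right.unop.vertex k).op rfl :
    g ⟶ StructuredArrow.mk (m.vertex (g.hom.unop.1 k)).op)
  rw [vertexLeg, ← hnat, Category.assoc]
  congr 1
  exact (f.semisimplicialCechNerve_map_π (g.right.unop.obj.vertex k) 0).symm

lemma vertexLeg_comp_hom_of_lt {i j : Fin (m.len + 1)} (hij : i < j) :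
    vertexLeg s i ≫ f.hom = vertexLeg s j ≫ f.hom := by
  let e := StructuredArrow.mk (T := deltaSIncl.op) (m.edge hij).op
  have h₀ : s.π.app e ≫ WidePullback.π _ 0 = vertexLeg s i := π_app_comp_π s e 0
  have h₁ : s.π.app e ≫ WidePullback.π _ 1 = vertexLeg s j := π_app_comp_π s e 1
  rw [← h₀, ← h₁, Category.assoc, Category.assoc, WidePullback.π_arrow, WidePullback.π_arrow]

lemma vertexLeg_comp_hom (i j : Fin (m.len + 1)) :
    vertexLeg s i ≫ f.hom = vertexLeg s j ≫ f.hom := by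
  rcases lt_trichotomy i j with h | rfl | h
  · exact vertexLeg_comp_hom_of_lt s h
  · rfl
  · exact (vertexLeg_comp_hom_of_lt s h).symm

noncomputable def lift : s.pt ⟶ (f.restrictionRightExtension.coneAt (Opposite.op m)).pt :=
  WidePullback.lift (vertexLeg s 0 ≫ f.hom) (vertexLeg s) fun i => vertexLeg_comp_hom s i 0

lemma lift_π (k : Fin (m.len + 1)) : lift s ≫ WidePullback.π _ k = vertexLeg s k :=
  WidePullback.lift_π ..

variable (f) in
noncomputable def isPointwiseRightKanExtension :
    f.restrictionRightExtension.IsPointwiseRightKanExtension := fun ⟨m⟩ =>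
  IsLimit.mk lift
    -- `erw`: `(deltaSToSimplex.obj m).len` and `m.len` agree only up to unfolding, so the
    -- wide pullbacks in the goal and in the lemmas are indexed by syntactically different types
    (fun s g => WidePullback.hom_ext_of_nonempty _ _ fun k => by
      erw [Category.assoc, coneAt_π_app_comp_π, lift_π, π_app_comp_π])
    (fun s w hw => WidePullback.hom_ext_of_nonempty _ _ fun k => by
      erw [lift_π, vertexLeg, ← hw, Category.assoc, coneAt_π_app_comp_π]
      rfl)

end restrictionRightExtension

end CategoryTheory.Arrow

/-- The semisimplicial object underlying the Čech nerve of `p : Y ⟶ X` is the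
pointwise right Kan extension of its restriction to `Δ_{s,≤1}ᵒᵖ` along the
inclusion `j₁ᵒᵖ : Δ_{s,≤1}ᵒᵖ ⥤ Δ_sᵒᵖ`: the identity exhibits it as a right Kan
extension of its own restriction. -/
theorem cechNerve_semisimplicial_isRightKanExtension
    {C : Type u} [Category.{v} C] [HasFiniteWidePullbacks C]
    {X Y : C} (p : Y ⟶ X) :
    (deltaSToSimplex.op ⋙ (Arrow.mk p).cechNerve).IsRightKanExtension
      (𝟙 (deltaSIncl.op ⋙ (deltaSToSimplex.op ⋙ (Arrow.mk p).cechNerve))) :=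
  (Arrow.restrictionRightExtension.isPointwiseRightKanExtension (Arrow.mk p)).isRightKanExtension
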